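/- arXiv:1411.6772 — 4 statements merged into one kernel-verified Lean document; each statement's English description precedes it below -/
import Mathlib

section
/- (Necessary condition, dynamic form.) Let A be a solution of the proto-cell ODE, let b be a moiety combination that is not fed (bᵀf_nu = 0), and suppose there is λ_min > 0 such that λ(A(t)) ≥ λ_min for all t ≥ 0. Then bᵀA(t) ≤ bᵀA(0)·e^{−λ_min·t} for all t ≥ 0; in particular bᵀA(t) → 0 as t → ∞. -/
open Matrix Filter Set

/-! Along a solution, `g = bᵀA` satisfies `g' = -f_me(A) b_me - λ(A) g ≤ -λ_min g`: the reaction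
term vanishes because `bᵀS = 0`, the influx term because `b` is not fed, and the dilution term
gives the decay. Hence `g(t) e^{λ_min t}` is nonincreasing, and `g ≥ 0` squeezes `g` to `0`. -/

theorem HasDerivWithinAt.const_dotProduct {n : Type*} [Fintype n] {A : ℝ → n → ℝ} {A' : n → ℝ}
    {s : Set ℝ} {t : ℝ} (b : n → ℝ) (hA : HasDerivWithinAt A A' s t) :
    HasDerivWithinAt (fun τ => b ⬝ᵥ A τ) (b ⬝ᵥ A') s t :=
  HasDerivWithinAt.fun_sum fun i _ => (hasDerivWithinAt_pi.1 hA i).const_mul (b i)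

theorem le_mul_exp_neg_of_hasDerivWithinAt_le {g g' : ℝ → ℝ} {a c : ℝ}
    (hg : ∀ t ∈ Ici a, HasDerivWithinAt g (g' t) (Ici a) t)
    (hg' : ∀ t ∈ Ici a, g' t ≤ -c * g t) {t : ℝ} (ht : a ≤ t) :
    g t ≤ g a * Real.exp (-c * (t - a)) := by
  have hexp : ∀ s, HasDerivAt (fun s => Real.exp (c * s)) (Real.exp (c * s) * c) s := fun s => by
    simpa using ((hasDerivAt_id s).const_mul c).exp
  have hderiv : ∀ s ∈ Ici a, HasDerivWithinAt (fun s => Real.exp (c * s) * g s)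
      (Real.exp (c * s) * c * g s + Real.exp (c * s) * g' s) (Ici a) s :=
    fun s hs => (hexp s).hasDerivWithinAt.mul (hg s hs)
  have hanti : AntitoneOn (fun s => Real.exp (c * s) * g s) (Ici a) := by
    refine antitoneOn_of_hasDerivWithinAt_nonpos
      (f' := fun s => Real.exp (c * s) * c * g s + Real.exp (c * s) * g' s) (convex_Ici a)
      (fun s hs => (hderiv s hs).continuousWithinAt) (fun s hs => ?_) (fun s hs => ?_)
    · rw [interior_Ici] at hs ⊢
      exact (hderiv s (Ioi_subset_Ici_self hs)).mono Ioi_subset_Ici_self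
    · rw [interior_Ici] at hs
      have hg's := hg' s (Ioi_subset_Ici_self hs)
      have hexp_pos := Real.exp_pos (c * s)
      nlinarith
  have hmono := hanti self_mem_Ici ht ht
  have hexp_eq : Real.exp (-c * (t - a)) = Real.exp (c * a) / Real.exp (c * t) := by
    rw [← Real.exp_sub]; ring_nf
  rw [hexp_eq, mul_div_assoc', le_div_iff₀ (Real.exp_pos _)]
  linarith

theorem dotProduct_moiety_rhs {m n : Type*} [Fintype m] [Fintype n] [DecidableEq m]
    {S : Matrix m n ℝ} {b fnu : m → ℝ} (hbS : vecMul b S = 0) (hb_unfed : b ⬝ᵥ fnu = 0)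
    (x : n → ℝ) (a : m → ℝ) (me : m) (μ ν : ℝ) :
    b ⬝ᵥ (S *ᵥ x + fnu - μ • Pi.single me 1 - ν • a) = -(μ * b me) - ν * (b ⬝ᵥ a) := by
  rw [dotProduct_sub, dotProduct_sub, dotProduct_add, dotProduct_mulVec, hbS, hb_unfed,
    dotProduct_smul, dotProduct_smul, dotProduct_single_one, smul_eq_mul, smul_eq_mul,
    zero_dotProduct, zero_add, zero_sub]

theorem protocell_unfed_moiety_decays_general
    (N R : ℕ) (S : Matrix (Fin N) (Fin R) ℝ)
    (f : (Fin N → ℝ) → Fin R → ℝ)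
    (me : Fin N)
    (Cme : ℝ)
    (fme : (Fin N → ℝ) → ℝ)
    (hfme_nonneg : ∀ x : Fin N → ℝ, (∀ i, 0 ≤ x i) → 0 ≤ fme x)
    (fnu : Fin N → ℝ)
    (A : ℝ → Fin N → ℝ)
    (hA_nonneg : ∀ t ≥ (0:ℝ), ∀ i, 0 ≤ A t i)
    (hODE : ∀ t ≥ (0:ℝ), HasDerivWithinAt A
      (S.mulVec (f (A t)) + fnu - fme (A t) • (Pi.single me 1 : Fin N → ℝ)
        - (fme (A t) / Cme) • A t) (Set.Ici 0) t)
    (b : Fin N → ℝ) (hb_nonneg : ∀ i, 0 ≤ b i)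
    (hbS : Matrix.vecMul b S = 0)
    (hb_unfed : b ⬝ᵥ fnu = 0)
    (lamMin : ℝ) (hlamMin : 0 < lamMin)
    (hlam : ∀ t ≥ (0:ℝ), lamMin ≤ fme (A t) / Cme) :
    (∀ t ≥ (0:ℝ), b ⬝ᵥ A t ≤ (b ⬝ᵥ A 0) * Real.exp (-lamMin * t)) ∧
      Tendsto (fun t => b ⬝ᵥ A t) atTop (nhds 0) := by
  have hbA_nonneg : ∀ t ≥ (0:ℝ), 0 ≤ b ⬝ᵥ A t := fun t ht =>
    dotProduct_nonneg_of_nonneg hb_nonneg (hA_nonneg t ht)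
  have hderiv : ∀ t ∈ Ici (0:ℝ), HasDerivWithinAt (fun τ => b ⬝ᵥ A τ)
      (-(fme (A t) * b me) - fme (A t) / Cme * (b ⬝ᵥ A t)) (Ici 0) t := fun t ht => by
    simpa only [dotProduct_moiety_rhs hbS hb_unfed] using (hODE t ht).const_dotProduct b
  have hbound : ∀ t ∈ Ici (0:ℝ),
      -(fme (A t) * b me) - fme (A t) / Cme * (b ⬝ᵥ A t) ≤ -lamMin * (b ⬝ᵥ A t) := by
    intro t ht
    have hconsumption := mul_nonneg (hfme_nonneg _ (hA_nonneg t ht)) (hb_nonneg me)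
    have hdilution := mul_le_mul_of_nonneg_right (hlam t ht) (hbA_nonneg t ht)
    linarith
  have hdecay : ∀ t ≥ (0:ℝ), b ⬝ᵥ A t ≤ (b ⬝ᵥ A 0) * Real.exp (-lamMin * t) := fun t ht => by
    simpa only [sub_zero] using le_mul_exp_neg_of_hasDerivWithinAt_le hderiv hbound ht
  have hexp_lim : Tendsto (fun t => (b ⬝ᵥ A 0) * Real.exp (-lamMin * t)) atTop (nhds 0) := by
    simpa only [neg_mul, mul_zero, Function.comp_def, id] using
      (Real.tendsto_exp_neg_atTop_nhds_zero.comp (tendsto_id.const_mul_atTop hlamMin)).const_mul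
        (b ⬝ᵥ A 0)
  exact ⟨hdecay, squeeze_zero' (eventually_ge_atTop 0 |>.mono hbA_nonneg)
    (eventually_ge_atTop 0 |>.mono hdecay) hexp_lim⟩

/-- Necessary condition, dynamic form: if a moiety combination `b` is
not fed and the growth rate is bounded below by `λ_min > 0`, then
`bᵀA(t) ≤ bᵀA(0)·e^(−λ_min t)` and `bᵀA(t) → 0`. -/
theorem protocell_unfed_moiety_decays
    (N R : ℕ) (S : Matrix (Fin N) (Fin R) ℝ)
    (f : (Fin N → ℝ) → Fin R → ℝ) (hf_cont : Continuous f)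
    (hf_nonneg : ∀ x : Fin N → ℝ, (∀ i, 0 ≤ x i) → ∀ j, 0 ≤ f x j)
    (me : Fin N) (Sme : Finset (Fin N)) (hme : me ∈ Sme)
    (Cme : ℝ) (hCme : 0 < Cme)
    (fme : (Fin N → ℝ) → ℝ) (hfme_cont : Continuous fme)
    (hfme_nonneg : ∀ x : Fin N → ℝ, (∀ i, 0 ≤ x i) → 0 ≤ fme x)
    (hfme_mono : ∀ x y : Fin N → ℝ, (∀ i, x i ≤ y i) → fme x ≤ fme y)
    (hfme_pos : ∀ x : Fin N → ℝ, (∀ i, 0 ≤ x i) → (0 < fme x ↔ ∀ i ∈ Sme, 0 < x i))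
    (Snu : Finset (Fin N)) (fnu : Fin N → ℝ)
    (hfnu_nonneg : ∀ i, 0 ≤ fnu i) (hfnu_supp : ∀ i ∉ Snu, fnu i = 0)
    (A : ℝ → Fin N → ℝ)
    (hA_nonneg : ∀ t ≥ (0:ℝ), ∀ i, 0 ≤ A t i)
    (hODE : ∀ t ≥ (0:ℝ), HasDerivWithinAt A
      (S.mulVec (f (A t)) + fnu - fme (A t) • (Pi.single me 1 : Fin N → ℝ)
        - (fme (A t) / Cme) • A t) (Set.Ici 0) t)
    (b : Fin N → ℝ) (hb_ne : b ≠ 0) (hb_nonneg : ∀ i, 0 ≤ b i)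
    (hbS : Matrix.vecMul b S = 0)
    (hb_unfed : b ⬝ᵥ fnu = 0)
    (lamMin : ℝ) (hlamMin : 0 < lamMin)
    (hlam : ∀ t ≥ (0:ℝ), lamMin ≤ fme (A t) / Cme) :
    (∀ t ≥ (0:ℝ), b ⬝ᵥ A t ≤ (b ⬝ᵥ A 0) * Real.exp (-lamMin * t)) ∧
      Tendsto (fun t => b ⬝ᵥ A t) atTop (nhds 0) :=
  protocell_unfed_moiety_decays_general N R S f me Cme fme hfme_nonneg fnu A hA_nonneg hODE b
    hb_nonneg hbS hb_unfed lamMin hlamMin hlam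
end

section
/- (Necessary condition, stationary form.) Let A_st ∈ ℝ^N_{≥0} be a stationary point of the proto-cell ODE, i.e. S·f(A_st) + f_nu − f_me(A_st)·e_me − λ(A_st)·A_st = 0, with positive growth rate λ(A_st) > 0. Then every moiety combination b with C_me·b_me + bᵀA_st > 0 is fed: bᵀf_nu > 0. In particular, if the network is conservative with mass vector m (all components of m strictly positive and mᵀS = 0), then mᵀf_nu > 0. -/
open Matrix Filter

/-- Necessary condition, stationary form: at a stationary point with
positive growth rate, every moiety combination `b` with `C_me·b_me + bᵀA_st > 0` is fed;
in particular, a strictly positive mass vector is fed. -/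
theorem protocell_stationary_necessary_condition
    (N R : ℕ) (S : Matrix (Fin N) (Fin R) ℝ)
    (f : (Fin N → ℝ) → Fin R → ℝ) (hf_cont : Continuous f)
    (hf_nonneg : ∀ x : Fin N → ℝ, (∀ i, 0 ≤ x i) → ∀ j, 0 ≤ f x j)
    (me : Fin N) (Sme : Finset (Fin N)) (hme : me ∈ Sme)
    (Cme : ℝ) (hCme : 0 < Cme)
    (fme : (Fin N → ℝ) → ℝ) (hfme_cont : Continuous fme)
    (hfme_nonneg : ∀ x : Fin N → ℝ, (∀ i, 0 ≤ x i) → 0 ≤ fme x)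
    (hfme_mono : ∀ x y : Fin N → ℝ, (∀ i, x i ≤ y i) → fme x ≤ fme y)
    (hfme_pos : ∀ x : Fin N → ℝ, (∀ i, 0 ≤ x i) → (0 < fme x ↔ ∀ i ∈ Sme, 0 < x i))
    (Snu : Finset (Fin N)) (fnu : Fin N → ℝ)
    (hfnu_nonneg : ∀ i, 0 ≤ fnu i) (hfnu_supp : ∀ i ∉ Snu, fnu i = 0)
    (Ast : Fin N → ℝ) (hAst_nonneg : ∀ i, 0 ≤ Ast i)
    (hstat : S.mulVec (f Ast) + fnu - fme Ast • (Pi.single me 1 : Fin N → ℝ)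
      - (fme Ast / Cme) • Ast = 0)
    (hlam_pos : 0 < fme Ast / Cme) :
    (∀ b : Fin N → ℝ, b ≠ 0 → (∀ i, 0 ≤ b i) → Matrix.vecMul b S = 0 →
      0 < Cme * b me + b ⬝ᵥ Ast → 0 < b ⬝ᵥ fnu) ∧
    (∀ m : Fin N → ℝ, (∀ i, 0 < m i) → Matrix.vecMul m S = 0 → 0 < m ⬝ᵥ fnu) := by
  have key : ∀ b : Fin N → ℝ, Matrix.vecMul b S = 0 →
      b ⬝ᵥ fnu = (fme Ast / Cme) * (Cme * b me + b ⬝ᵥ Ast) := by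
    intro b hb
    have h0 : b ⬝ᵥ (S.mulVec (f Ast) + fnu - fme Ast • (Pi.single me 1 : Fin N → ℝ)
        - (fme Ast / Cme) • Ast) = 0 := by rw [hstat]; simp
    rw [dotProduct_sub, dotProduct_sub, dotProduct_add, dotProduct_mulVec, hb,
      dotProduct_smul, dotProduct_smul, zero_dotProduct] at h0
    have hsingle : b ⬝ᵥ (Pi.single me 1 : Fin N → ℝ) = b me := by
      simp [dotProduct, Pi.single_apply, Finset.sum_ite_eq']
    rw [hsingle] at h0
    simp only [smul_eq_mul] at h0
    have hCinv : Cme * Cme⁻¹ = 1 := mul_inv_cancel₀ hCme.ne'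
    field_simp
    linear_combination Cme * h0 + fme Ast * (b ⬝ᵥ Ast) * hCinv
  constructor
  · intro b _ _ hbS hpos
    rw [key b hbS]
    exact mul_pos hlam_pos hpos
  · intro m hm hmS
    rw [key m hmS]
    apply mul_pos hlam_pos
    have : 0 ≤ m ⬝ᵥ Ast :=
      Finset.sum_nonneg fun i _ => mul_nonneg (hm i).le (hAst_nonneg i)
    nlinarith [mul_pos hCme (hm me)]
end

section
/- (Angeli et al., Proposition 5.4, as restated in the paper.) Consider the closed chemical reaction network system dA/dt = S·f(A) with kinetics compatible with the network structure, and let A : [0,∞) → ℝ^N_{≥0} be a bounded solution with strictly positive initial conditions (A_i(0) > 0 for all i). If the ω-limit set of A (the set of limits of A(t_n) over sequences t_n → ∞) contains a point w whose zero set Z = {i : w_i = 0} is nonempty, then Z is a siphon. -/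
/-!
Suppose `i ∈ Z` is a product of a reaction `j` none of whose reactants lies in `Z`. Then
`f_j(w) > 0`, and every reaction consuming species `i` has rate `0` at `w`, so the `i`-th
component of the vector field is strictly positive at `w`, hence exceeds some `c > 0` on a
neighbourhood of `w`.
A bounded solution has bounded speed, so each time it comes close to `w` it has spent a
window of fixed length `r` in that neighbourhood, during which `A_i` grew by at least `c r`.
Thus `A_i ≥ c r` at all those times, contradicting `A_i(t_n) → w_i = 0`.
-/

open Matrix Filter Set Topology

section OmegaLimit

variable {E : Type*} [NormedAddCommGroup E] [NormedSpace ℝ E]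

theorem uniformContinuousOn_Ici_of_bounded_solution [ProperSpace E] {F : E → E}
    (hF : Continuous F) {A : ℝ → E}
    (hODE : ∀ t ≥ (0:ℝ), HasDerivWithinAt A (F (A t)) (Ici 0) t)
    (hbdd : ∃ M : ℝ, ∀ t ≥ (0:ℝ), ‖A t‖ ≤ M) :
    UniformContinuousOn A (Ici 0) := by
  obtain ⟨M, hM⟩ := hbdd
  obtain ⟨K, hK⟩ :=
    (isCompact_closedBall (0 : E) M).exists_bound_of_continuousOn hF.continuousOn
  have hspeed : ∀ t ∈ Ici (0:ℝ), ‖F (A t)‖₊ ≤ K.toNNReal := fun t ht => by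
    rw [← NNReal.coe_le_coe, coe_nnnorm, Real.coe_toNNReal']
    exact le_max_of_le_left (hK _ (mem_closedBall_zero_iff.2 (hM t ht)))
  exact ((convex_Ici 0).lipschitzOnWith_of_nnnorm_hasDerivWithin_le hODE
    hspeed).uniformContinuousOn

theorem mul_sub_le_sub_of_le_hasDerivWithinAt {g g' : ℝ → ℝ} {a b c : ℝ} (hab : a ≤ b)
    (hg : ∀ x ∈ Icc a b, HasDerivWithinAt g (g' x) (Icc a b) x)
    (hc : ∀ x ∈ Icc a b, c ≤ g' x) :
    c * (b - a) ≤ g b - g a := by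
  have hg_at : ∀ x ∈ interior (Icc a b), HasDerivAt g (g' x) x := fun x hx =>
    (hg x (interior_subset hx)).hasDerivAt (mem_interior_iff_mem_nhds.1 hx)
  refine (convex_Icc a b).mul_sub_le_image_sub_of_le_deriv
    (fun x hx => (hg x hx).continuousWithinAt)
    (fun x hx => (hg_at x hx).differentiableAt.differentiableWithinAt)
    (fun x hx => (hg_at x hx).deriv ▸ hc x (interior_subset hx))
    a (left_mem_Icc.2 hab) b (right_mem_Icc.2 hab) hab

theorem map_vectorField_nonpos_of_tendsto [ProperSpace E] {F : E → E} (hF : Continuous F)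
    {A : ℝ → E} (hODE : ∀ t ≥ (0:ℝ), HasDerivWithinAt A (F (A t)) (Ici 0) t)
    (hbdd : ∃ M : ℝ, ∀ t ≥ (0:ℝ), ‖A t‖ ≤ M) (ℓ : E →L[ℝ] ℝ)
    (hℓA : ∀ t ≥ (0:ℝ), 0 ≤ ℓ (A t)) {w : E} {ts : ℕ → ℝ} (hts : Tendsto ts atTop atTop)
    (hw : Tendsto (fun n => A (ts n)) atTop (𝓝 w)) (hℓw : ℓ w = 0) :
    ℓ (F w) ≤ 0 := by
  by_contra! hpos
  set c := ℓ (F w) / 2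
  obtain ⟨δ, hδ, hnear⟩ : ∃ δ > 0, ∀ x, dist x w < δ → c < ℓ (F x) :=
    Metric.eventually_nhds_iff.1
      (((ℓ.continuous.comp hF).tendsto w).eventually (lt_mem_nhds (half_lt_self hpos)))
  obtain ⟨s, hs, hunif⟩ := Metric.uniformContinuousOn_iff.1
    (uniformContinuousOn_Ici_of_bounded_solution hF hODE hbdd) (δ / 2) (half_pos hδ)
  set r := s / 2 with hr_def
  obtain ⟨n, hrt, hdist, hsmall⟩ : ∃ n, r ≤ ts n ∧ dist (A (ts n)) w < δ / 2 ∧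
      ℓ (A (ts n)) < c * r :=
    ((hts.eventually_ge_atTop r).and ((hw.eventually (Metric.ball_mem_nhds w (half_pos hδ))).and
      (((ℓ.continuous.tendsto w).comp hw).eventually
        (gt_mem_nhds (by rw [hℓw]; positivity))))).exists
  set t := ts n
  have hwindow : Icc (t - r) t ⊆ Ici 0 := fun τ hτ => le_trans (by linarith) hτ.1
  have hgrowth : ∀ τ ∈ Icc (t - r) t, c ≤ ℓ (F (A τ)) := fun τ hτ => by
    refine (hnear _ ?_).le
    have : dist (A τ) (A t) < δ / 2 :=
      hunif τ (hwindow hτ) t (hwindow (right_mem_Icc.2 (by linarith))) (by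
        rw [Real.dist_eq, abs_lt]
        constructor <;> linarith [hτ.1, hτ.2, half_lt_self hs])
    linarith [dist_triangle (A τ) (A t) w, (Metric.mem_ball.1 hdist)]
  have hincr := mul_sub_le_sub_of_le_hasDerivWithinAt (g := fun τ => ℓ (A τ)) (by linarith)
    (fun τ hτ => ℓ.hasFDerivAt.comp_hasDerivWithinAt τ ((hODE τ (hwindow hτ)).mono hwindow))
    hgrowth
  have hstart : 0 ≤ ℓ (A (t - r)) := hℓA _ (by linarith)
  rw [sub_sub_cancel] at hincr
  linarith

end OmegaLimit

section ReactionNetwork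

variable {σ ρ : Type*} {Y Y' : Matrix σ ρ ℕ} {S : Matrix σ ρ ℝ}
  {f : (σ → ℝ) → ρ → ℝ}

theorem rate_nonneg_of_compat
    (hf_zero : ∀ (j : ρ) (x : σ → ℝ), (∀ i, 0 ≤ x i) → (∃ k, 0 < Y k j ∧ x k = 0) → f x j = 0)
    (hf_pos : ∀ (j : ρ) (x : σ → ℝ), (∀ k, 0 < Y k j → 0 < x k) → 0 < f x j)
    {x : σ → ℝ} (hx : ∀ i, 0 ≤ x i) (j : ρ) : 0 ≤ f x j := by
  by_cases hreactant : ∃ k, 0 < Y k j ∧ x k = 0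
  · exact (hf_zero j x hx hreactant).ge
  · exact (hf_pos j x fun k hk => (hx k).lt_of_ne fun hk0 => hreactant ⟨k, hk, hk0.symm⟩).le

theorem mulVec_apply_pos_of_reactants_pos [Fintype ρ]
    (hS : ∀ i j, S i j = (Y' i j : ℝ) - (Y i j : ℝ))
    (hf_zero : ∀ (j : ρ) (x : σ → ℝ), (∀ i, 0 ≤ x i) → (∃ k, 0 < Y k j ∧ x k = 0) → f x j = 0)
    (hf_pos : ∀ (j : ρ) (x : σ → ℝ), (∀ k, 0 < Y k j → 0 < x k) → 0 < f x j)
    {w : σ → ℝ} (hw : ∀ i, 0 ≤ w i) {i : σ} {j : ρ} (hwi : w i = 0) (hY' : 0 < Y' i j)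
    (hreactants : ∀ k, 0 < Y k j → 0 < w k) :
    0 < (S *ᵥ f w) i := by
  have hterm_nonneg : ∀ j', 0 ≤ S i j' * f w j' := fun j' => by
    rcases Nat.eq_zero_or_pos (Y i j') with hY | hY
    · rw [hS, hY, Nat.cast_zero, sub_zero]
      exact mul_nonneg (Nat.cast_nonneg _) (rate_nonneg_of_compat hf_zero hf_pos hw j')
    · rw [hf_zero j' w hw ⟨i, hY, hwi⟩, mul_zero]
  have hYij : Y i j = 0 := by
    by_contra hY
    exact (hreactants i (Nat.pos_of_ne_zero hY)).ne' hwi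
  have hterm_pos : 0 < S i j * f w j := by
    rw [hS, hYij, Nat.cast_zero, sub_zero]
    exact mul_pos (Nat.cast_pos.2 hY') (hf_pos j w hreactants)
  exact Finset.sum_pos' (fun j' _ => hterm_nonneg j') ⟨j, Finset.mem_univ j, hterm_pos⟩

end ReactionNetwork

theorem omega_limit_zero_set_is_siphon_general
    (N R : ℕ) (Y Y' : Matrix (Fin N) (Fin R) ℕ)
    (S : Matrix (Fin N) (Fin R) ℝ)
    (hS : ∀ i j, S i j = (Y' i j : ℝ) - (Y i j : ℝ))
    (f : (Fin N → ℝ) → Fin R → ℝ) (hf_cont : Continuous f)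
    (hf_compat_zero : ∀ (j : Fin R) (x : Fin N → ℝ), (∀ i, 0 ≤ x i) →
      (∃ k, 0 < Y k j ∧ x k = 0) → f x j = 0)
    (hf_compat_pos : ∀ (j : Fin R) (x : Fin N → ℝ), (∀ k, 0 < Y k j → 0 < x k) →
      0 < f x j)
    (A : ℝ → Fin N → ℝ)
    (hA_nonneg : ∀ t ≥ (0:ℝ), ∀ i, 0 ≤ A t i)
    (hODE : ∀ t ≥ (0:ℝ), HasDerivWithinAt A (S.mulVec (f (A t))) (Set.Ici 0) t)
    (hA_bounded : ∃ M : ℝ, ∀ t ≥ (0:ℝ), ‖A t‖ ≤ M)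
    (w : Fin N → ℝ) (ts : ℕ → ℝ)
    (hts : Tendsto ts atTop atTop)
    (hw : Tendsto (fun n => A (ts n)) atTop (nhds w)) :
    ∀ (j : Fin R), ∀ i, w i = 0 → 0 < Y' i j → ∃ k, w k = 0 ∧ 0 < Y k j := by
  intro j i hwi hY'
  have hw_nonneg : ∀ k, 0 ≤ w k := fun k => ge_of_tendsto (tendsto_pi_nhds.1 hw k)
    ((hts.eventually_ge_atTop 0).mono fun n hn => hA_nonneg _ hn k)
  by_contra hsiphon
  have hreactants : ∀ k, 0 < Y k j → 0 < w k := fun k hk =>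
    (hw_nonneg k).lt_of_ne fun hk0 => hsiphon ⟨k, hk0.symm, hk⟩
  have hnonpos : (S *ᵥ f w) i ≤ 0 :=
    map_vectorField_nonpos_of_tendsto (continuous_const.matrix_mulVec hf_cont) hODE
      hA_bounded (ContinuousLinearMap.proj i) (fun t ht => hA_nonneg t ht i) hts hw hwi
  exact hnonpos.not_gt
    (mulVec_apply_pos_of_reactants_pos hS hf_compat_zero hf_compat_pos hw_nonneg hwi hY' hreactants)

/-- Angeli et al., Proposition 5.4: for the closed system
`dA/dt = S·f(A)` with kinetics compatible with the network structure, a bounded solution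
with strictly positive initial conditions whose ω-limit set contains a point `w` with
nonempty zero set `Z = {i : w i = 0}` has `Z` a siphon. -/
theorem omega_limit_zero_set_is_siphon
    (N R : ℕ) (Y Y' : Matrix (Fin N) (Fin R) ℕ)
    (S : Matrix (Fin N) (Fin R) ℝ)
    (hS : ∀ i j, S i j = (Y' i j : ℝ) - (Y i j : ℝ))
    (f : (Fin N → ℝ) → Fin R → ℝ) (hf_cont : Continuous f)
    (hf_nonneg : ∀ x : Fin N → ℝ, (∀ i, 0 ≤ x i) → ∀ j, 0 ≤ f x j)
    (hf_compat_zero : ∀ (j : Fin R) (x : Fin N → ℝ), (∀ i, 0 ≤ x i) →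
      (∃ k, 0 < Y k j ∧ x k = 0) → f x j = 0)
    (hf_compat_pos : ∀ (j : Fin R) (x : Fin N → ℝ), (∀ k, 0 < Y k j → 0 < x k) →
      0 < f x j)
    (A : ℝ → Fin N → ℝ)
    (hA_nonneg : ∀ t ≥ (0:ℝ), ∀ i, 0 ≤ A t i)
    (hODE : ∀ t ≥ (0:ℝ), HasDerivWithinAt A (S.mulVec (f (A t))) (Set.Ici 0) t)
    (hA_bounded : ∃ M : ℝ, ∀ t ≥ (0:ℝ), ‖A t‖ ≤ M)
    (hA_pos_init : ∀ i, 0 < A 0 i)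
    (w : Fin N → ℝ) (ts : ℕ → ℝ)
    (hts_nonneg : ∀ n, 0 ≤ ts n)
    (hts : Tendsto ts atTop atTop)
    (hw : Tendsto (fun n => A (ts n)) atTop (nhds w))
    (hZ_ne : {i : Fin N | w i = 0}.Nonempty) :
    ∀ (j : Fin R), ∀ i, w i = 0 → 0 < Y' i j → ∃ k, w k = 0 ∧ 0 < Y k j :=
  omega_limit_zero_set_is_siphon_general N R Y Y' S hS f hf_cont hf_compat_zero hf_compat_pos A
    hA_nonneg hODE hA_bounded w ts hts hw
end

section
/- (Persistence lemma.) In the proto-cell model with kinetics compatible with the network structure, suppose that every siphon Z containing some species of S_me contains the support of a fed moiety combination. Then along every bounded solution A of the proto-cell ODE with strictly positive initial conditions (A_i(0) > 0 for all i), every species in S_me is persistent: liminf_{t→∞} A_i(t) > 0 for all i ∈ S_me. -/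
/-!
Let `x` be an ω-limit point of `A` whose `i`-th coordinate is the liminf of `A · i`. The zero set
`Z` of `x` is a siphon: if some `p ∈ Z` were produced by a reaction whose reactants are all
positive at `x`, that reaction would run at a rate bounded below near `x` while the consumption
of `p` vanishes with `A p`, so `A p` would be pushed up to a fixed positive level every time the
trajectory passes near `x`, contradicting `x p = 0`. If `x i = 0` for some `i ∈ S_me`, the
hypothesis yields a fed moiety combination `b` supported in `Z`. Along the flow `b ⬝ᵥ A` gains
`b ⬝ᵥ f_nu > 0`, while its losses (membrane incorporation and dilution) vanish with `b ⬝ᵥ A`, so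
`b ⬝ᵥ A` stays above a positive constant; yet `b ⬝ᵥ x = 0`.
-/

open Matrix Filter Set Topology

theorem IsCompact.exists_mapClusterPt_apply_eq {α X Y : Type*} [TopologicalSpace X]
    [TopologicalSpace Y] [T2Space Y] {K : Set X} (hK : IsCompact K) {l : Filter α} {A : α → X}
    (hAK : ∀ᶠ t in l, A t ∈ K) {ψ : X → Y} (hψ : Continuous ψ) {c : Y}
    (hc : MapClusterPt c l (ψ ∘ A)) : ∃ x ∈ K, MapClusterPt x l A ∧ ψ x = c := by
  have : (comap ψ (𝓝 c) ⊓ map A l).NeBot := neBot_inf_comap_iff_map'.2 hc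
  obtain ⟨x, hxK, hx⟩ := hK.exists_clusterPt
    (f := comap ψ (𝓝 c) ⊓ map A l) (inf_le_right.trans (le_principal_iff.2 hAK))
  exact ⟨x, hxK, hx.mono inf_le_right,
    eq_of_nhds_neBot ((hx.mono inf_le_left).map hψ.continuousAt tendsto_comap)⟩

theorem IsCompact.exists_pos_forall_lt_of_nonpos {X : Type*} [TopologicalSpace X] {K : Set X}
    (hK : IsCompact K) {ψ Φ : X → ℝ} (hψ : ContinuousOn ψ K) (hΦ : Continuous Φ) {ε : ℝ}
    (h : ∀ z ∈ K, ψ z ≤ 0 → Φ z < ε) : ∃ η > 0, ∀ z ∈ K, ψ z ≤ η → Φ z < ε := by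
  obtain hempty | hne := (K ∩ Φ ⁻¹' Ici ε).eq_empty_or_nonempty
  · exact ⟨1, one_pos, fun z hz _ => not_le.1 fun hΦz => hempty.subset ⟨hz, hΦz⟩⟩
  obtain ⟨z₀, hz₀, hmin⟩ := (hK.inter_right (isClosed_Ici.preimage hΦ)).exists_isMinOn hne
    (hψ.mono inter_subset_left)
  have hψz₀ : 0 < ψ z₀ := not_le.1 fun h0 => (h z₀ hz₀.1 h0).not_ge hz₀.2
  refine ⟨ψ z₀ / 2, half_pos hψz₀, fun z hz hψz => not_le.1 fun hΦz => ?_⟩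
  linarith [show ψ z₀ ≤ ψ z from hmin ⟨hz, hΦz⟩]

theorem min_le_image_of_le_deriv_right {h h' : ℝ → ℝ} {a b η κ : ℝ} (hab : a ≤ b) (hκ : 0 < κ)
    (hc : ContinuousOn h (Icc a b)) (hd : ∀ t ∈ Ico a b, HasDerivWithinAt h (h' t) (Ici t) t)
    (hstep : ∀ t ∈ Ico a b, h t ≤ η → κ ≤ h' t) :
    min η (h a + κ * (b - a)) ≤ h b := by
  by_cases hcross : ∃ u ∈ Icc a b, η ≤ h u
  · obtain ⟨u, hu, hηu⟩ := hcross
    -- once `h` reaches `η` it stays above it, since it strictly increases at the level `η`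
    have := image_le_of_deriv_right_lt_deriv_boundary' (f := fun t => -h t) (B := fun _ => -η)
      (B' := fun _ => 0) (hc.mono (Icc_subset_Icc_left hu.1)).neg
      (fun t ht => (hd t ⟨hu.1.trans ht.1, ht.2⟩).neg) (neg_le_neg hηu) continuousOn_const
      (fun _ _ => hasDerivWithinAt_const _ _ _)
      (fun t ht hht => by linarith [hstep t ⟨hu.1.trans ht.1, ht.2⟩ (by linarith)])
      ⟨hu.2, le_rfl⟩
    exact (min_le_left _ _).trans (neg_le_neg_iff.1 this)
  · push Not at hcross
    have := image_le_of_deriv_right_le_deriv_boundary (f := fun t => -h t)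
      (B := fun t => -(h a + κ * (t - a))) (B' := fun _ => -κ) hc.neg
      (fun t ht => (hd t ht).neg) (by simp) (by fun_prop)
      (fun t _ => (((hasDerivAt_id t).sub_const a).const_mul κ).const_add (h a) |>.neg
        |>.hasDerivWithinAt |>.congr_deriv (by simp))
      (fun t ht => neg_le_neg (hstep t ht (hcross t (Ico_subset_Icc_self ht)).le))
      ⟨hab, le_rfl⟩
    exact (min_le_right _ _).trans (neg_le_neg_iff.1 this)

theorem dotProduct_pos_of_ne_zero {ι : Type*} [Fintype ι] {b z : ι → ℝ} (hb : 0 ≤ b)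
    (hb0 : b ≠ 0) (hz : ∀ i, 0 < z i) : 0 < b ⬝ᵥ z := by
  obtain ⟨k, hk⟩ := Function.ne_iff.1 hb0
  exact Finset.sum_pos' (fun i _ => mul_nonneg (hb i) (hz i).le)
    ⟨k, Finset.mem_univ k, mul_pos ((hb k).lt_of_ne' hk) (hz k)⟩

theorem dotProduct_eq_zero_of_forall_pos_imp {ι : Type*} [Fintype ι] {b z : ι → ℝ}
    (hb : 0 ≤ b) (h : ∀ k, 0 < b k → z k = 0) : b ⬝ᵥ z = 0 :=
  Finset.sum_eq_zero fun k _ => by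
    rcases (hb k).eq_or_lt with hbk | hbk
    · simp [← hbk]
    · rw [h k hbk, mul_zero]

theorem mul_eq_zero_of_dotProduct_eq_zero {ι : Type*} [Fintype ι] {b z : ι → ℝ} (hb : 0 ≤ b)
    (hz : 0 ≤ z) (h : b ⬝ᵥ z = 0) (k : ι) : b k * z k = 0 :=
  (Finset.sum_eq_zero_iff_of_nonneg fun i _ => mul_nonneg (hb i) (hz i)).1 h k (Finset.mem_univ k)

section Trajectory

variable {E : Type*} [NormedAddCommGroup E] [NormedSpace ℝ E] {A : ℝ → E} {F : E → E}
  {K : Set E}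

theorem min_le_apply_of_hasDerivWithinAt
    (hA : ∀ t ≥ 0, HasDerivWithinAt A (F (A t)) (Ici 0) t) (ℓ : E →L[ℝ] ℝ) {a b η κ : ℝ}
    (ha : 0 ≤ a) (hab : a ≤ b) (hκ : 0 < κ)
    (hstep : ∀ t ∈ Ico a b, ℓ (A t) ≤ η → κ ≤ ℓ (F (A t))) :
    min η (ℓ (A a) + κ * (b - a)) ≤ ℓ (A b) := by
  have hℓA : ∀ t ≥ 0, HasDerivWithinAt (ℓ ∘ A) (ℓ (F (A t))) (Ici 0) t :=
    fun t ht => ℓ.hasFDerivAt.comp_hasDerivWithinAt t (hA t ht)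
  exact min_le_image_of_le_deriv_right hab hκ
    (fun t ht => (hℓA t (ha.trans ht.1)).continuousWithinAt.mono fun s hs => ha.trans hs.1)
    (fun t ht => (hℓA t (ha.trans ht.1)).mono (Ici_subset_Ici.2 (ha.trans ht.1))) hstep

theorem exists_lipschitzOnWith_of_hasDerivWithinAt (hK : IsCompact K) (hF : ContinuousOn F K)
    (hAK : ∀ t ≥ 0, A t ∈ K) (hA : ∀ t ≥ 0, HasDerivWithinAt A (F (A t)) (Ici 0) t) :
    ∃ C, LipschitzOnWith C A (Ici 0) := by
  obtain ⟨C, hC⟩ := hK.exists_bound_of_continuousOn hF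
  refine ⟨C.toNNReal, (convex_Ici 0).lipschitzOnWith_of_nnnorm_hasDerivWithin_le hA
    fun t ht => ?_⟩
  rw [← NNReal.coe_le_coe, coe_nnnorm]
  exact (hC _ (hAK t ht)).trans (Real.le_coe_toNNReal C)

theorem exists_nhds_eventually_le_of_production (hK : IsCompact K) (hF : ContinuousOn F K)
    (hAK : ∀ t ≥ 0, A t ∈ K) (hA : ∀ t ≥ 0, HasDerivWithinAt A (F (A t)) (Ici 0) t)
    {x : E} (ℓ : E →L[ℝ] ℝ) (hℓK : ∀ z ∈ K, 0 ≤ ℓ z) {r Φ : E → ℝ} (hr : ContinuousAt r x)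
    (hrx : 0 < r x) (hΦ : Continuous Φ) (hΦℓ : ∀ z ∈ K, ℓ z ≤ 0 → Φ z ≤ 0)
    (hFℓ : ∀ z ∈ K, r z - Φ z ≤ ℓ (F z)) :
    ∃ U ∈ 𝓝 x, ∃ m > 0, ∀ᶠ t in atTop, A t ∈ U → m ≤ ℓ (A t) := by
  obtain ⟨C, hC⟩ := exists_lipschitzOnWith_of_hasDerivWithinAt hK hF hAK hA
  obtain ⟨δ, hδ, hrδ⟩ := Metric.continuousAt_iff.1 hr (r x / 2) (half_pos hrx)
  obtain ⟨η, hη, hΦη⟩ := hK.exists_pos_forall_lt_of_nonpos ℓ.continuous.continuousOn hΦ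
    (ε := r x / 4) fun z hz h => (hΦℓ z hz h).trans_lt (by positivity)
  -- by the Lipschitz bound, `A` stays within `δ` of `x` during the time `τ` before it is
  -- within `δ / 2` of `x`
  set τ := δ / (2 * (C + 1)) with hτ_def
  have hτ : 0 < τ := by positivity
  have hCτ : C * τ < δ / 2 := by
    rw [hτ_def, mul_div_assoc', div_lt_div_iff₀ (by positivity) two_pos]
    nlinarith
  refine ⟨Metric.ball x (δ / 2), Metric.ball_mem_nhds _ (half_pos hδ),
    min η (r x / 4 * τ), lt_min hη (by positivity), ?_⟩
  filter_upwards [eventually_ge_atTop τ] with t ht hdist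
  have ht0 : 0 ≤ t - τ := sub_nonneg.2 ht
  have hnear : ∀ u ∈ Icc (t - τ) t, dist (A u) x < δ := fun u hu => calc
    dist (A u) x ≤ dist (A u) (A t) + dist (A t) x := dist_triangle _ _ _
    _ < C * τ + δ / 2 := by
      refine add_lt_add_of_le_of_lt ((hC.dist_le_mul u (ht0.trans hu.1) t
        (ht0.trans (hu.1.trans hu.2))).trans (mul_le_mul_of_nonneg_left ?_ C.2)) hdist
      rw [Real.dist_eq, abs_sub_comm, abs_of_nonneg (sub_nonneg.2 hu.2)]
      linarith [hu.1]
    _ < δ := by linarith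
  have hgrow := min_le_apply_of_hasDerivWithinAt hA ℓ ht0 (sub_le_self _ hτ.le)
    (by positivity : 0 < r x / 4) fun u hu hℓu => by
      have hu0 : 0 ≤ u := ht0.trans hu.1
      have hru := hrδ (hnear u (Ico_subset_Icc_self hu))
      rw [Real.dist_eq, abs_lt] at hru
      linarith [hΦη _ (hAK u hu0) hℓu, hFℓ _ (hAK u hu0)]
  refine le_trans (min_le_min_left _ ?_) hgrow
  rw [sub_sub_cancel]
  linarith [hℓK _ (hAK _ ht0)]

theorem MapClusterPt.pos_of_production (hK : IsCompact K) (hF : ContinuousOn F K)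
    (hAK : ∀ t ≥ 0, A t ∈ K) (hA : ∀ t ≥ 0, HasDerivWithinAt A (F (A t)) (Ici 0) t)
    {x : E} (hx : MapClusterPt x atTop A) (ℓ : E →L[ℝ] ℝ) (hℓK : ∀ z ∈ K, 0 ≤ ℓ z)
    {r Φ : E → ℝ} (hr : ContinuousAt r x) (hrx : 0 < r x) (hΦ : Continuous Φ)
    (hΦℓ : ∀ z ∈ K, ℓ z ≤ 0 → Φ z ≤ 0) (hFℓ : ∀ z ∈ K, r z - Φ z ≤ ℓ (F z)) : 0 < ℓ x := by
  obtain ⟨U, hU, m, hm, hlow⟩ :=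
    exists_nhds_eventually_le_of_production hK hF hAK hA ℓ hℓK hr hrx hΦ hΦℓ hFℓ
  by_contra! hx0
  have hV : ∀ᶠ z in 𝓝 x, z ∈ U ∧ ℓ z < m :=
    (show ∀ᶠ z in 𝓝 x, z ∈ U from hU).and (ℓ.continuous.continuousAt.eventually_lt
      continuousAt_const (hx0.trans_lt hm))
  obtain ⟨t, ⟨htU, htm⟩, ht⟩ := ((hx.frequently hV).and_eventually hlow).exists
  exact htm.not_ge (ht htU)

theorem exists_pos_forall_le_of_inflow (hK : IsCompact K) (hAK : ∀ t ≥ 0, A t ∈ K)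
    (hA : ∀ t ≥ 0, HasDerivWithinAt A (F (A t)) (Ici 0) t) (ℓ : E →L[ℝ] ℝ) {c : ℝ}
    (hc : 0 < c) {Φ : E → ℝ} (hΦ : Continuous Φ) (hΦℓ : ∀ z ∈ K, ℓ z ≤ 0 → Φ z ≤ 0)
    (hFℓ : ∀ z ∈ K, c - Φ z ≤ ℓ (F z)) (h0 : 0 < ℓ (A 0)) :
    ∃ m > 0, ∀ t ≥ 0, m ≤ ℓ (A t) := by
  obtain ⟨η, hη, hΦη⟩ := hK.exists_pos_forall_lt_of_nonpos ℓ.continuous.continuousOn hΦ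
    (ε := c / 2) fun z hz h => (hΦℓ z hz h).trans_lt (half_pos hc)
  refine ⟨min η (ℓ (A 0)), lt_min hη h0, fun t ht => ?_⟩
  have hgrow := min_le_apply_of_hasDerivWithinAt hA ℓ le_rfl ht (half_pos hc)
    fun u hu hℓu => by linarith [hΦη _ (hAK u hu.1) hℓu, hFℓ _ (hAK u hu.1)]
  refine le_trans (min_le_min_left _ ?_) hgrow
  nlinarith

end Trajectory

noncomputable section Protocell

variable {ι ρ : Type*} {Sme : Finset ι} {fme : (ι → ℝ) → ℝ}

def IsSiphon (Y Y' : Matrix ι ρ ℕ) (Z : Set ι) : Prop :=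
  ∀ j, ∀ i ∈ Z, 0 < Y' i j → ∃ k ∈ Z, 0 < Y k j

theorem fme_eq_zero_of_apply_eq_zero
    (hfme_nonneg : ∀ x : ι → ℝ, (∀ i, 0 ≤ x i) → 0 ≤ fme x)
    (hfme_pos : ∀ x : ι → ℝ, (∀ i, 0 ≤ x i) → (0 < fme x ↔ ∀ i ∈ Sme, 0 < x i))
    {z : ι → ℝ} (hz : 0 ≤ z) {k : ι} (hk : k ∈ Sme) (hzk : z k = 0) : fme z = 0 :=
  le_antisymm (not_lt.1 fun h => ((hfme_pos z hz).1 h k hk).ne' hzk) (hfme_nonneg z hz)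

variable [Fintype ρ] [DecidableEq ι] {Y Y' : Matrix ι ρ ℕ} {S : Matrix ι ρ ℝ}
  {f : (ι → ℝ) → ρ → ℝ} {fnu : ι → ℝ} {me : ι} {Cme : ℝ}

def protocellField (S : Matrix ι ρ ℝ) (f : (ι → ℝ) → ρ → ℝ) (fnu : ι → ℝ) (me : ι)
    (fme : (ι → ℝ) → ℝ) (Cme : ℝ) (z : ι → ℝ) : ι → ℝ :=
  S *ᵥ f z + fnu - fme z • Pi.single me 1 - (fme z / Cme) • z

def protocellConsumption (Y : Matrix ι ρ ℕ) (f : (ι → ℝ) → ρ → ℝ) (me : ι)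
    (fme : (ι → ℝ) → ℝ) (Cme : ℝ) (p : ι) (z : ι → ℝ) : ℝ :=
  ∑ j, (Y p j : ℝ) * f z j + (Pi.single me 1 : ι → ℝ) p * fme z + fme z / Cme * z p

theorem continuous_protocellField (hf : Continuous f) (hfme : Continuous fme) :
    Continuous (protocellField S f fnu me fme Cme) := by
  unfold protocellField
  fun_prop

theorem continuous_protocellConsumption (hf : Continuous f) (hfme : Continuous fme) (p : ι) :
    Continuous (protocellConsumption Y f me fme Cme p) := by
  unfold protocellConsumption
  fun_prop

theorem protocellField_apply (hS : ∀ i j, S i j = (Y' i j : ℝ) - (Y i j : ℝ))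
    (z : ι → ℝ) (p : ι) :
    protocellField S f fnu me fme Cme z p =
      ∑ j, (Y' p j : ℝ) * f z j + fnu p - protocellConsumption Y f me fme Cme p z := by
  simp only [protocellField, protocellConsumption, Pi.sub_apply, Pi.add_apply, Pi.smul_apply,
    smul_eq_mul, mulVec, dotProduct, hS, sub_mul, Finset.sum_sub_distrib]
  ring

theorem sub_protocellConsumption_le_protocellField_apply
    (hS : ∀ i j, S i j = (Y' i j : ℝ) - (Y i j : ℝ)) {z : ι → ℝ}
    (hf_nonneg : ∀ j, 0 ≤ f z j) {p : ι} (hfnu : 0 ≤ fnu p) {j : ρ} (hY' : 0 < Y' p j) :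
    f z j - protocellConsumption Y f me fme Cme p z ≤ protocellField S f fnu me fme Cme z p := by
  have hprod : f z j ≤ ∑ j, (Y' p j : ℝ) * f z j := calc
    f z j ≤ (Y' p j : ℝ) * f z j :=
      le_mul_of_one_le_left (hf_nonneg j) (by exact_mod_cast hY')
    _ ≤ ∑ j, (Y' p j : ℝ) * f z j :=
      Finset.single_le_sum (fun j _ => mul_nonneg (Nat.cast_nonneg _) (hf_nonneg j))
        (Finset.mem_univ j)
  rw [protocellField_apply hS]
  linarith

theorem dotProduct_protocellField [Fintype ι] {b : ι → ℝ} (hbS : vecMul b S = 0) (z : ι → ℝ) :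
    b ⬝ᵥ protocellField S f fnu me fme Cme z =
      b ⬝ᵥ fnu - (fme z * b me + fme z / Cme * (b ⬝ᵥ z)) := by
  simp only [protocellField, dotProduct_sub, dotProduct_add, dotProduct_smul, dotProduct_mulVec,
    hbS, zero_dotProduct, dotProduct_single, smul_eq_mul, mul_one]
  ring

theorem protocellConsumption_eq_zero
    (hf_compat_zero : ∀ (j : ρ) (x : ι → ℝ), (∀ i, 0 ≤ x i) →
      (∃ k, 0 < Y k j ∧ x k = 0) → f x j = 0)
    (hfme_nonneg : ∀ x : ι → ℝ, (∀ i, 0 ≤ x i) → 0 ≤ fme x)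
    (hfme_pos : ∀ x : ι → ℝ, (∀ i, 0 ≤ x i) → (0 < fme x ↔ ∀ i ∈ Sme, 0 < x i))
    (hme : me ∈ Sme) {z : ι → ℝ} (hz : 0 ≤ z) {p : ι} (hzp : z p = 0) :
    protocellConsumption Y f me fme Cme p z = 0 := by
  have hreact : ∑ j, (Y p j : ℝ) * f z j = 0 := Finset.sum_eq_zero fun j _ => by
    rcases Nat.eq_zero_or_pos (Y p j) with h | h
    · simp [h]
    · rw [hf_compat_zero j z hz ⟨p, h, hzp⟩, mul_zero]
  have hmembrane : (Pi.single me 1 : ι → ℝ) p * fme z = 0 := by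
    by_cases hp : p = me
    · subst hp
      rw [fme_eq_zero_of_apply_eq_zero hfme_nonneg hfme_pos hz hme hzp, mul_zero]
    · rw [Pi.single_eq_of_ne hp, zero_mul]
  simp only [protocellConsumption, hreact, hmembrane, hzp, mul_zero, add_zero]

theorem isSiphon_setOf_eq_zero_of_mapClusterPt [Fintype ι]
    (hS : ∀ i j, S i j = (Y' i j : ℝ) - (Y i j : ℝ)) (hf_cont : Continuous f)
    (hf_nonneg : ∀ x : ι → ℝ, (∀ i, 0 ≤ x i) → ∀ j, 0 ≤ f x j)
    (hf_compat_zero : ∀ (j : ρ) (x : ι → ℝ), (∀ i, 0 ≤ x i) →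
      (∃ k, 0 < Y k j ∧ x k = 0) → f x j = 0)
    (hf_compat_pos : ∀ (j : ρ) (x : ι → ℝ), (∀ k, 0 < Y k j → 0 < x k) → 0 < f x j)
    (hme : me ∈ Sme) (hfme_cont : Continuous fme)
    (hfme_nonneg : ∀ x : ι → ℝ, (∀ i, 0 ≤ x i) → 0 ≤ fme x)
    (hfme_pos : ∀ x : ι → ℝ, (∀ i, 0 ≤ x i) → (0 < fme x ↔ ∀ i ∈ Sme, 0 < x i))
    (hfnu_nonneg : ∀ i, 0 ≤ fnu i) {K : Set (ι → ℝ)} (hK : IsCompact K) (hK0 : ∀ z ∈ K, 0 ≤ z)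
    {A : ℝ → ι → ℝ} (hAK : ∀ t ≥ 0, A t ∈ K)
    (hA : ∀ t ≥ 0, HasDerivWithinAt A (protocellField S f fnu me fme Cme (A t)) (Ici 0) t)
    {x : ι → ℝ} (hxK : x ∈ K) (hx : MapClusterPt x atTop A) :
    IsSiphon Y Y' {k | x k = 0} := by
  intro j p hp hY'
  by_contra! hreact
  have hrx : 0 < f x j := hf_compat_pos j x fun k hk =>
    (hK0 x hxK k).lt_of_ne' fun hxk => not_lt.2 (hreact k hxk) hk
  refine (hx.pos_of_production hK (continuous_protocellField hf_cont hfme_cont).continuousOn hAK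
    hA (ContinuousLinearMap.proj p) (fun z hz => hK0 z hz p)
    ((continuous_apply j).comp hf_cont).continuousAt hrx
    (continuous_protocellConsumption hf_cont hfme_cont p) (fun z hz hzp => ?_)
    fun z hz => sub_protocellConsumption_le_protocellField_apply hS (hf_nonneg z (hK0 z hz))
      (hfnu_nonneg p) hY').ne' hp
  exact (protocellConsumption_eq_zero hf_compat_zero hfme_nonneg hfme_pos hme (hK0 z hz)
    (le_antisymm hzp (hK0 z hz p))).le

theorem exists_pos_le_dotProduct_of_fed [Fintype ι] (hme : me ∈ Sme) (hfme_cont : Continuous fme)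
    (hfme_nonneg : ∀ x : ι → ℝ, (∀ i, 0 ≤ x i) → 0 ≤ fme x)
    (hfme_pos : ∀ x : ι → ℝ, (∀ i, 0 ≤ x i) → (0 < fme x ↔ ∀ i ∈ Sme, 0 < x i))
    {K : Set (ι → ℝ)} (hK : IsCompact K) (hK0 : ∀ z ∈ K, 0 ≤ z)
    {A : ℝ → ι → ℝ} (hAK : ∀ t ≥ 0, A t ∈ K)
    (hA : ∀ t ≥ 0, HasDerivWithinAt A (protocellField S f fnu me fme Cme (A t)) (Ici 0) t)
    {b : ι → ℝ} (hb : 0 ≤ b) (hbS : vecMul b S = 0) (hfed : 0 < b ⬝ᵥ fnu)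
    (h0 : 0 < b ⬝ᵥ A 0) : ∃ m > 0, ∀ t ≥ 0, m ≤ b ⬝ᵥ A t := by
  refine exists_pos_forall_le_of_inflow hK hAK hA
    (LinearMap.toContinuousLinearMap (dotProductBilin ℝ ℝ b)) hfed
    (Φ := fun z => fme z * b me + fme z / Cme * (b ⬝ᵥ z)) (by fun_prop) (fun z hz hbz => ?_)
    (fun z _ => (dotProduct_protocellField hbS z).ge) h0
  have hbz0 : b ⬝ᵥ z = 0 := le_antisymm hbz (dotProduct_nonneg_of_nonneg hb (hK0 z hz))
  have hmembrane : fme z * b me = 0 := by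
    rcases (hb me).eq_or_lt with h | h
    · simp [← h]
    · have hzme : z me = 0 := (mul_eq_zero.1
        (mul_eq_zero_of_dotProduct_eq_zero hb (hK0 z hz) hbz0 me)).resolve_left h.ne'
      rw [fme_eq_zero_of_apply_eq_zero hfme_nonneg hfme_pos (hK0 z hz) hme hzme, zero_mul]
  simp [hmembrane, hbz0]

end Protocell

theorem protocell_membrane_species_persistence_general
    (N R : ℕ) (Y Y' : Matrix (Fin N) (Fin R) ℕ)
    (S : Matrix (Fin N) (Fin R) ℝ)
    (hS : ∀ i j, S i j = (Y' i j : ℝ) - (Y i j : ℝ))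
    (f : (Fin N → ℝ) → Fin R → ℝ) (hf_cont : Continuous f)
    (hf_nonneg : ∀ x : Fin N → ℝ, (∀ i, 0 ≤ x i) → ∀ j, 0 ≤ f x j)
    (hf_compat_zero : ∀ (j : Fin R) (x : Fin N → ℝ), (∀ i, 0 ≤ x i) →
      (∃ k, 0 < Y k j ∧ x k = 0) → f x j = 0)
    (hf_compat_pos : ∀ (j : Fin R) (x : Fin N → ℝ), (∀ k, 0 < Y k j → 0 < x k) →
      0 < f x j)
    (me : Fin N) (Sme : Finset (Fin N)) (hme : me ∈ Sme)
    (Cme : ℝ)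
    (fme : (Fin N → ℝ) → ℝ) (hfme_cont : Continuous fme)
    (hfme_nonneg : ∀ x : Fin N → ℝ, (∀ i, 0 ≤ x i) → 0 ≤ fme x)
    (hfme_pos : ∀ x : Fin N → ℝ, (∀ i, 0 ≤ x i) → (0 < fme x ↔ ∀ i ∈ Sme, 0 < x i))
    (fnu : Fin N → ℝ)
    (hfnu_nonneg : ∀ i, 0 ≤ fnu i)
    (hsiphon : ∀ Z : Set (Fin N), Z.Nonempty →
      (∀ (j : Fin R), ∀ i ∈ Z, 0 < Y' i j → ∃ k ∈ Z, 0 < Y k j) →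
      (∃ i ∈ Sme, i ∈ Z) →
      ∃ b : Fin N → ℝ, b ≠ 0 ∧ (∀ i, 0 ≤ b i) ∧ Matrix.vecMul b S = 0 ∧
        0 < b ⬝ᵥ fnu ∧ ∀ i, 0 < b i → i ∈ Z)
    (A : ℝ → Fin N → ℝ)
    (hA_nonneg : ∀ t ≥ (0:ℝ), ∀ i, 0 ≤ A t i)
    (hODE : ∀ t ≥ (0:ℝ), HasDerivWithinAt A
      (S.mulVec (f (A t)) + fnu - fme (A t) • (Pi.single me 1 : Fin N → ℝ)
        - (fme (A t) / Cme) • A t) (Set.Ici 0) t)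
    (hA_bounded : ∃ M : ℝ, ∀ t ≥ (0:ℝ), ‖A t‖ ≤ M)
    (hA_pos_init : ∀ i, 0 < A 0 i) :
    ∀ i ∈ Sme, 0 < Filter.liminf (fun t => A t i) Filter.atTop := by
  intro i hi
  obtain ⟨M, hM⟩ := hA_bounded
  set K : Set (Fin N → ℝ) := Icc 0 fun _ => M
  have hK0 : ∀ z ∈ K, 0 ≤ z := fun z hz => hz.1
  have hAK : ∀ t ≥ 0, A t ∈ K := fun t ht => ⟨hA_nonneg t ht, fun k =>
    (le_abs_self _).trans ((norm_le_pi_norm (A t) k).trans (hM t ht))⟩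
  have hAK' : ∀ᶠ t in atTop, A t ∈ K := eventually_atTop.2 ⟨0, hAK⟩
  obtain ⟨x, hxK, hx, hxi⟩ := isCompact_Icc.exists_mapClusterPt_apply_eq hAK'
    (continuous_apply i) (MapClusterPt.liminf
      (isCoboundedUnder_ge_of_eventually_le atTop (hAK'.mono fun t ht => ht.2 i))
      (isBoundedUnder_of_eventually_ge (hAK'.mono fun t ht => ht.1 i)))
  suffices 0 < x i from hxi ▸ this
  refine (hK0 x hxK i).lt_of_ne' fun hxi0 => ?_
  have hZ := isSiphon_setOf_eq_zero_of_mapClusterPt hS hf_cont hf_nonneg hf_compat_zero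
    hf_compat_pos hme hfme_cont hfme_nonneg hfme_pos hfnu_nonneg isCompact_Icc hK0 hAK hODE hxK hx
  obtain ⟨b, hb0, hb, hbS, hfed, hbZ⟩ := hsiphon _ ⟨i, hxi0⟩ hZ ⟨i, hi, hxi0⟩
  obtain ⟨m, hm, hbA⟩ := exists_pos_le_dotProduct_of_fed hme hfme_cont hfme_nonneg hfme_pos
    isCompact_Icc hK0 hAK hODE hb hbS hfed (dotProduct_pos_of_ne_zero hb hb0 hA_pos_init)
  have hmx : m ≤ b ⬝ᵥ x := (isClosed_le continuous_const (continuous_const.dotProduct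
    continuous_id)).mem_of_mapClusterPt hx (eventually_atTop.2 ⟨0, hbA⟩)
  linarith [dotProduct_eq_zero_of_forall_pos_imp hb hbZ]

/-- Persistence lemma: if every (nonempty) siphon containing some
species of `S_me` contains the support of a fed moiety combination, then along every
bounded solution with strictly positive initial conditions every species of `S_me` is
persistent. -/
theorem protocell_membrane_species_persistence
    (N R : ℕ) (Y Y' : Matrix (Fin N) (Fin R) ℕ)
    (S : Matrix (Fin N) (Fin R) ℝ)
    (hS : ∀ i j, S i j = (Y' i j : ℝ) - (Y i j : ℝ))
    (f : (Fin N → ℝ) → Fin R → ℝ) (hf_cont : Continuous f)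
    (hf_nonneg : ∀ x : Fin N → ℝ, (∀ i, 0 ≤ x i) → ∀ j, 0 ≤ f x j)
    (hf_compat_zero : ∀ (j : Fin R) (x : Fin N → ℝ), (∀ i, 0 ≤ x i) →
      (∃ k, 0 < Y k j ∧ x k = 0) → f x j = 0)
    (hf_compat_pos : ∀ (j : Fin R) (x : Fin N → ℝ), (∀ k, 0 < Y k j → 0 < x k) →
      0 < f x j)
    (me : Fin N) (Sme : Finset (Fin N)) (hme : me ∈ Sme)
    (Cme : ℝ) (hCme : 0 < Cme)
    (fme : (Fin N → ℝ) → ℝ) (hfme_cont : Continuous fme)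
    (hfme_nonneg : ∀ x : Fin N → ℝ, (∀ i, 0 ≤ x i) → 0 ≤ fme x)
    (hfme_mono : ∀ x y : Fin N → ℝ, (∀ i, x i ≤ y i) → fme x ≤ fme y)
    (hfme_pos : ∀ x : Fin N → ℝ, (∀ i, 0 ≤ x i) → (0 < fme x ↔ ∀ i ∈ Sme, 0 < x i))
    (Snu : Finset (Fin N)) (fnu : Fin N → ℝ)
    (hfnu_nonneg : ∀ i, 0 ≤ fnu i) (hfnu_supp : ∀ i ∉ Snu, fnu i = 0)
    (hsiphon : ∀ Z : Set (Fin N), Z.Nonempty →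
      (∀ (j : Fin R), ∀ i ∈ Z, 0 < Y' i j → ∃ k ∈ Z, 0 < Y k j) →
      (∃ i ∈ Sme, i ∈ Z) →
      ∃ b : Fin N → ℝ, b ≠ 0 ∧ (∀ i, 0 ≤ b i) ∧ Matrix.vecMul b S = 0 ∧
        0 < b ⬝ᵥ fnu ∧ ∀ i, 0 < b i → i ∈ Z)
    (A : ℝ → Fin N → ℝ)
    (hA_nonneg : ∀ t ≥ (0:ℝ), ∀ i, 0 ≤ A t i)
    (hODE : ∀ t ≥ (0:ℝ), HasDerivWithinAt A
      (S.mulVec (f (A t)) + fnu - fme (A t) • (Pi.single me 1 : Fin N → ℝ)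
        - (fme (A t) / Cme) • A t) (Set.Ici 0) t)
    (hA_bounded : ∃ M : ℝ, ∀ t ≥ (0:ℝ), ‖A t‖ ≤ M)
    (hA_pos_init : ∀ i, 0 < A 0 i) :
    ∀ i ∈ Sme, 0 < Filter.liminf (fun t => A t i) Filter.atTop :=
  protocell_membrane_species_persistence_general N R Y Y' S hS f hf_cont hf_nonneg hf_compat_zero
    hf_compat_pos me Sme hme Cme fme hfme_cont hfme_nonneg hfme_pos fnu hfnu_nonneg hsiphon A
    hA_nonneg hODE hA_bounded hA_pos_init
end
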